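/- arXiv:2210.11784 — 5 statements merged into one kernel-verified Lean document; each statement's English description precedes it below -/
import Mathlib

section
/- Under the re-hanging process of the clustering algorithm: if initially F_0 is a BFS forest (so d_0 is 1-Lipschitz along G-edges), and in each step every re-hung vertex v gets a new parent w adjacent in G with d_j(w) ≤ d_0(w) + 2j (inductively), then every red vertex u in F_{j} satisfies d_j(u) ≤ d_0(u) + 2j for all j ≥ 0. -/
/-- The Red Property of the Ruling Claim: depths `d j` in the evolving forests `F j`,
with `red j` marking the red vertices at step `j`. -/
theorem red_property {V : Type*} [Fintype V] (G : SimpleGraph V)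
    (d : ℕ → V → ℕ) (red : ℕ → V → Prop)
    -- d 0 is 1-Lipschitz along G-edges (F₀ is a BFS forest)
    (hlip : ∀ u v, G.Adj u v → d 0 u ≤ d 0 v + 1)
    -- red vertices stay red with unchanged root-paths
    (hredstay : ∀ j u, red j u → red (j + 1) u ∧ d (j + 1) u = d j u)
    -- blue vertices keep their original depth
    (hblue : ∀ j u, ¬ red j u → d j u = d 0 u)
    -- a newly red vertex u lies in the re-hung subtree of some proposer v,
    -- whose new parent w is a red G-neighbor of v
    (hnew : ∀ j u, ¬ red j u → red (j + 1) u →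
      ∃ v w, ¬ red j v ∧ G.Adj v w ∧ red j w ∧ d 0 v ≤ d 0 u ∧
        d (j + 1) u = (d 0 u - d 0 v) + 1 + d j w) :
    ∀ j u, red j u → d j u ≤ d 0 u + 2 * j := by
  intro j
  induction j with
  | zero => intro u _; simp
  | succ j ih =>
    intro u hu
    by_cases h : red j u
    · have := (hredstay j u h).2
      have := ih u h
      omega
    · obtain ⟨v, w, hv, hvw, hw, hle, heq⟩ := hnew j u h hu
      have h1 : d 0 w ≤ d 0 v + 1 := hlip w v hvw.symm
      have h2 := ih w hw
      omega
end

section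
/- Let n ≥ 1 and b = ⌈log₂ n⌉ + 1. Then 2b² steps of doubling-threshold growth suffice: any integer sequence 1 ≤ s_0 < s_1 < ... with s_{j+1} ≥ s_j + ⌈s_j/(2b)⌉ satisfies s_j > n for some j ≤ 2b². -/
theorem integer_growth_bound (n : ℕ) (hn : 1 ≤ n) (b : ℕ) (hb : b = Nat.clog 2 n + 1)
    (s : ℕ → ℕ) (h0 : 1 ≤ s 0)
    (hgrow : ∀ j, s (j + 1) ≥ s j + (s j + 2 * b - 1) / (2 * b)) :
    ∃ j ≤ 2 * b ^ 2, s j > n := by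
  have hb1 : 1 ≤ b := by omega
  have hmono : Monotone s := monotone_nat_of_le_succ (fun j => le_trans (Nat.le_add_right _ _) (hgrow j))
  -- accumulated growth over m steps
  have key : ∀ k m, s k + m * ((s k + 2 * b - 1) / (2 * b)) ≤ s (k + m) := by
    intro k m
    induction m with
    | zero => simp
    | succ p ih =>
      have h1 := hgrow (k + p)
      have h2 : (s k + 2 * b - 1) / (2 * b) ≤ (s (k + p) + 2 * b - 1) / (2 * b) := by
        apply Nat.div_le_div_right
        have := hmono (Nat.le_add_right k p)
        omega
      calc s k + (p + 1) * ((s k + 2 * b - 1) / (2 * b))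
          = (s k + p * ((s k + 2 * b - 1) / (2 * b))) + (s k + 2 * b - 1) / (2 * b) := by ring
        _ ≤ s (k + p) + (s (k + p) + 2 * b - 1) / (2 * b) := by omega
        _ ≤ s (k + p + 1) := h1
  -- ceiling division bound: 2b * ceil(x / 2b) ≥ x
  have ceil_ge : ∀ x : ℕ, x ≤ 2 * b * ((x + 2 * b - 1) / (2 * b)) := by
    intro x
    have hd : 0 < 2 * b := by omega
    have h1 := Nat.div_add_mod (x + 2 * b - 1) (2 * b)
    have h2 := Nat.mod_lt (x + 2 * b - 1) hd
    omega
  -- doubling in 2b steps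
  have dbl : ∀ k, 2 * s k ≤ s (k + 2 * b) := by
    intro k
    have := key k (2 * b)
    have := ceil_ge (s k)
    omega
  -- s (2*b*m) ≥ 2^m
  have pow : ∀ m, 2 ^ m ≤ s (2 * b * m) := by
    intro m
    induction m with
    | zero => simpa using h0
    | succ p ih =>
      have h1 := dbl (2 * b * p)
      have h2 : 2 * b * (p + 1) = 2 * b * p + 2 * b := by ring
      rw [h2]
      calc 2 ^ (p + 1) = 2 * 2 ^ p := by ring
        _ ≤ 2 * s (2 * b * p) := by omega
        _ ≤ s (2 * b * p + 2 * b) := h1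
  refine ⟨2 * b ^ 2, le_refl _, ?_⟩
  have h1 : 2 ^ b ≤ s (2 * b * b) := pow b
  have h2 : 2 * b ^ 2 = 2 * b * b := by ring
  have h3 : n ≤ 2 ^ Nat.clog 2 n := Nat.le_pow_clog (by norm_num) n
  have h4 : 2 ^ b = 2 * 2 ^ Nat.clog 2 n := by rw [hb]; ring
  rw [h2]
  omega
end

section
/- Let G be a finite n-vertex graph. Suppose that for every induced subgraph H of G on at least one vertex, there exists a set S ⊆ V(H) with |S| ≥ |V(H)|/2 such that every connected component of H[S] has diameter at most D. Then there exists a partition of V(G) into at most ⌈log₂ n⌉ + 1 color classes such that for each color class, every connected component of the subgraph induced by that class has diameter at most D. -/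
/-!
Repeatedly apply the hypothesis to the set of still uncoloured vertices and give the clustered
half the next colour. Each round at least halves the number of uncoloured vertices, so after
`⌈log₂ n⌉ + 1` rounds none are left, and every colour class is one of the clusterings, whose
components have diameter at most `D`.
-/

open Set

lemma two_mul_ncard_sdiff_le_of_le_two_mul {α : Type*} {S W : Set α} (hW : W.Finite)
    (hS : S ⊆ W) (h : W.ncard ≤ 2 * S.ncard) : 2 * (W \ S).ncard ≤ W.ncard := by
  have hle : S.ncard ≤ W.ncard := ncard_le_ncard hS hW
  rw [ncard_sdiff' hS hW]
  omega

lemma exists_fiber_eq_sdiff_of_antitone {V : Type*} {R : ℕ → Set V} (hR : Antitone R)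
    (h0 : R 0 = univ) {N : ℕ} (hN : R (N + 1) = ∅) :
    ∃ col : V → ℕ, (∀ v, col v ≤ N) ∧ ∀ c, {v | col v = c} = R c \ R (c + 1) := by
  classical
  have hex (v : V) : ∃ k, v ∉ R (k + 1) := ⟨N, by simp [hN]⟩
  refine ⟨fun v => Nat.find (hex v), fun v => Nat.find_le (by simp [hN]), fun c => ?_⟩
  ext v
  simp only [mem_ofPred_eq, Nat.find_eq_iff, mem_sdiff, not_not]
  refine and_comm.trans (and_congr_left fun _ => ⟨fun hlt => ?_, fun hv k hk => ?_⟩)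
  · cases c with
    | zero => simp [h0]
    | succ m => exact hlt m m.lt_succ_self
  · exact hR (Nat.succ_le_of_lt hk) hv

section Peeling

variable {V : Type*} (F : Set V → Set V)

def peelRemaining (k : ℕ) : Set V := (fun W => W \ F W)^[k] univ

@[simp]
lemma peelRemaining_zero : peelRemaining F 0 = univ := rfl

lemma peelRemaining_succ (k : ℕ) :
    peelRemaining F (k + 1) = peelRemaining F k \ F (peelRemaining F k) :=
  Function.iterate_succ_apply' _ _ _

lemma peelRemaining_antitone : Antitone (peelRemaining F) :=
  antitone_nat_of_succ_le fun k => (peelRemaining_succ F k).trans_subset sdiff_subset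

variable [Finite V] {F} (hsub : ∀ W, F W ⊆ W) (hhalf : ∀ W, W.ncard ≤ 2 * (F W).ncard)
include hsub hhalf

lemma two_pow_mul_ncard_peelRemaining_le (k : ℕ) :
    2 ^ k * (peelRemaining F k).ncard ≤ Nat.card V := by
  induction k with
  | zero => simp
  | succ k ih =>
    calc 2 ^ (k + 1) * (peelRemaining F (k + 1)).ncard
        = 2 ^ k * (2 * (peelRemaining F (k + 1)).ncard) := by ring
      _ ≤ 2 ^ k * (peelRemaining F k).ncard := by
        rw [peelRemaining_succ]
        gcongr
        exact two_mul_ncard_sdiff_le_of_le_two_mul (toFinite _) (hsub _) (hhalf _)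
      _ ≤ Nat.card V := ih

lemma peelRemaining_clog_succ_eq_empty :
    peelRemaining F (Nat.clog 2 (Nat.card V) + 1) = ∅ := by
  set N := Nat.clog 2 (Nat.card V)
  have hlt : 2 ^ (N + 1) * (peelRemaining F (N + 1)).ncard < 2 ^ (N + 1) :=
    calc _ ≤ Nat.card V := two_pow_mul_ncard_peelRemaining_le hsub hhalf _
      _ ≤ 2 ^ N := Nat.le_pow_clog one_lt_two _
      _ < 2 ^ (N + 1) := Nat.pow_lt_pow_succ one_lt_two
  rw [← ncard_eq_zero]
  by_contra hne
  exact hlt.not_ge (Nat.le_mul_of_pos_right _ (Nat.pos_of_ne_zero hne))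

end Peeling

theorem exists_coloring_le_clog_of_forall_exists_half {V : Type*} [Finite V]
    (P : Set V → Prop) (h : ∀ W : Set V, ∃ S ⊆ W, W.ncard ≤ 2 * S.ncard ∧ P S) :
    ∃ col : V → ℕ, (∀ v, col v ≤ Nat.clog 2 (Nat.card V)) ∧
      ∀ c, P {v | col v = c} := by
  choose F hsub hhalf hP using h
  obtain ⟨col, hle, hclass⟩ := exists_fiber_eq_sdiff_of_antitone
    (peelRemaining_antitone F) (peelRemaining_zero F)
    (peelRemaining_clog_succ_eq_empty hsub hhalf)
  refine ⟨col, hle, fun c => ?_⟩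
  rw [hclass, peelRemaining_succ, sdiff_sdiff_right_self, inter_eq_right.mpr (hsub _)]
  exact hP _

theorem network_decomposition_from_clustering_general {V : Type*} [Fintype V]
    (G : SimpleGraph V) (D : ℕ)
    (hcluster : ∀ W : Set V, W.Nonempty → ∃ S : Set V, S ⊆ W ∧
      2 * S.ncard ≥ W.ncard ∧
      ∀ u v : S, (G.induce S).Reachable u v → (G.induce S).dist u v ≤ D) :
    ∃ col : V → ℕ,
      (∀ v, col v < Nat.clog 2 (Fintype.card V) + 1) ∧
      ∀ c : ℕ, ∀ u v : {x : V // col x = c},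
        (G.induce {x : V | col x = c}).Reachable ⟨u, u.2⟩ ⟨v, v.2⟩ →
        (G.induce {x : V | col x = c}).dist ⟨u, u.2⟩ ⟨v, v.2⟩ ≤ D := by
  have hcluster' (W : Set V) : ∃ S ⊆ W, W.ncard ≤ 2 * S.ncard ∧
      ∀ u v : S, (G.induce S).Reachable u v → (G.induce S).dist u v ≤ D := by
    rcases W.eq_empty_or_nonempty with rfl | hW
    · exact ⟨∅, empty_subset _, by simp, fun u => u.2.elim⟩
    · exact hcluster W hW
  obtain ⟨col, hle, hdiam⟩ := exists_coloring_le_clog_of_forall_exists_half _ hcluster'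
  rw [Nat.card_eq_fintype_card] at hle
  exact ⟨col, fun v => Nat.lt_succ_of_le (hle v), fun c u v => hdiam c u v⟩

theorem network_decomposition_from_clustering {V : Type*} [Fintype V] [Nonempty V]
    (G : SimpleGraph V) (D : ℕ)
    (hcluster : ∀ W : Set V, W.Nonempty → ∃ S : Set V, S ⊆ W ∧
      2 * S.ncard ≥ W.ncard ∧
      ∀ u v : S, (G.induce S).Reachable u v → (G.induce S).dist u v ≤ D) :
    ∃ col : V → ℕ,
      (∀ v, col v < Nat.clog 2 (Fintype.card V) + 1) ∧
      ∀ c : ℕ, ∀ u v : {x : V // col x = c},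
        (G.induce {x : V | col x = c}).Reachable ⟨u, u.2⟩ ⟨v, v.2⟩ →
        (G.induce {x : V | col x = c}).dist ⟨u, u.2⟩ ⟨v, v.2⟩ ≤ D :=
  network_decomposition_from_clustering_general G D hcluster
end

section
/- Let n ≥ 2 and b such that 2^b ≥ n. If a vertex set of size n is processed in b phases, where phase i removes at most n/(2b) vertices and ensures that surviving terminals in a common component agree on bit i, then at the end at least n/2 vertices survive and each surviving connected component has at most one terminal. -/
theorem end_guarantee {V : Type*} [Fintype V] [DecidableEq V] (G : SimpleGraph V)
    (n : ℕ) (hn : n = Fintype.card V) (hn2 : 2 ≤ n)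
    (b : ℕ) (hb : n ≤ 2 ^ b)
    (ident : V → Fin b → Bool) (hinj : Function.Injective ident)
    (Vs : ℕ → Finset V) (h0 : Vs 0 = Finset.univ)
    (hmono : ∀ i < b, Vs (i + 1) ⊆ Vs i)
    (hdel : ∀ i < b, ((Vs i).card : ℝ) - ((Vs (i + 1)).card : ℝ) ≤ n / (2 * b))
    (Q : Finset V) (hQ : Q ⊆ Vs b)
    (hsep : ∀ i : Fin b, ∀ q₁ q₂ : (Vs b : Set V),
      (q₁ : V) ∈ Q → (q₂ : V) ∈ Q →
      (G.induce (Vs b : Set V)).Reachable q₁ q₂ → ident q₁ i = ident q₂ i) :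
    ((Vs b).card : ℝ) ≥ n / 2 ∧
      ∀ q₁ q₂ : (Vs b : Set V), (q₁ : V) ∈ Q → (q₂ : V) ∈ Q →
        (G.induce (Vs b : Set V)).Reachable q₁ q₂ → q₁ = q₂ := by
  have hbpos : 0 < b := by
    by_contra h
    interval_cases b
    omega
  constructor
  · have key : ∀ k ≤ b, (n : ℝ) - ((Vs k).card : ℝ) ≤ k * (n / (2 * b)) := by
      intro k hk
      induction k with
      | zero => simp [h0, hn]
      | succ m ih =>
        have hm : m < b := hk
        have := hdel m hm
        have := ih (le_of_lt hm)
        push_cast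
        linarith
    have := key b le_rfl
    have hb' : (b : ℝ) ≠ 0 := Nat.cast_ne_zero.mpr hbpos.ne'
    have : (b : ℝ) * (n / (2 * b)) = n / 2 := by
      field_simp
    linarith [key b le_rfl, this.symm ▸ key b le_rfl]
  · intro q₁ q₂ h₁ h₂ hr
    have : ident q₁ = ident q₂ := funext fun i => hsep i q₁ q₂ h₁ h₂ hr
    exact Subtype.ext (hinj this)
end

section
/- For every finite n-vertex graph G with unique b-bit vertex identifiers (2^b ≥ n), there exists a subset V' ⊆ V(G) with |V'| ≥ n/2 such that every connected component of G[V'] has diameter at most 4·b·(2b²) = 8b³. -/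
/-!
Ball carving. Grow a ball around any remaining vertex, inside the subgraph induced by the
remaining vertices, until one more layer at most doubles it; since the vertex set has at most
`2 ^ b` elements this happens at some radius `r ≤ b`. Keep the ball, which has strong diameter at
most `2 * r`, discard its outer layer, which is no larger than the ball, and recurse on what lies
beyond it, which has no edge to the ball. The kept vertices make up at least half of the graph, and
every component they induce lies in a single ball, so has diameter at most `2 * b ≤ 8 * b ^ 3`.
-/

theorem exists_succ_le_two_mul_of_lt_two_pow {f : ℕ → ℕ} {b : ℕ} (h0 : 0 < f 0)
    (hb : f (b + 1) < 2 ^ (b + 1)) : ∃ r ≤ b, f (r + 1) ≤ 2 * f r := by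
  by_contra! hgrowth
  have hpow : ∀ r ≤ b + 1, 2 ^ r ≤ f r := by
    intro r
    induction r with
    | zero => intro; rwa [pow_zero]
    | succ r ih =>
      intro hr
      have := ih (by omega)
      have := hgrowth r (by omega)
      rw [pow_succ]
      omega
  exact (hpow (b + 1) le_rfl).not_gt hb

namespace SimpleGraph

variable {V : Type*} (G : SimpleGraph V)

def ComponentsDiamLE (s : Set V) (D : ℕ) : Prop :=
  ∀ u v : s, (G.induce s).Reachable u v → (G.induce s).dist u v ≤ D

def inducedBall (s : Set V) (x : V) (r : ℕ) : Set V :=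
  {v | ∃ p : G.Walk x v, p.length ≤ r ∧ ∀ w ∈ p.support, w ∈ s}

variable {G} {s t : Set V} {x u v a c : V} {r D : ℕ}

lemma Walk.length_induce (p : G.Walk u v) (hp : ∀ w ∈ p.support, w ∈ s) :
    (p.induce s hp).length = p.length := by
  have := congrArg Walk.length (p.map_induce hp)
  rwa [Walk.length_map] at this

lemma Walk.support_map_induce_subset {u v : s} (p : (G.induce s).Walk u v) :
    ∀ w ∈ (p.map (Embedding.induce s).toHom).support, w ∈ s := by
  rw [Walk.support_map]
  intro w hw
  obtain ⟨a, -, rfl⟩ := List.mem_map.1 hw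
  exact a.2

lemma componentsDiamLE_iff : G.ComponentsDiamLE s D ↔
    ∀ ⦃u v⦄ (p : G.Walk u v), (∀ w ∈ p.support, w ∈ s) →
      ∃ q : G.Walk u v, q.length ≤ D ∧ ∀ w ∈ q.support, w ∈ s := by
  constructor
  · intro h u v p hp
    obtain ⟨q, hq⟩ := Reachable.exists_walk_length_eq_dist ⟨p.induce s hp⟩
    exact ⟨q.map (Embedding.induce s).toHom,
      (Walk.length_map _ q).trans_le (hq ▸ h _ _ ⟨p.induce s hp⟩), q.support_map_induce_subset⟩
  · rintro h u v ⟨p⟩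
    obtain ⟨q, hqD, hq⟩ := h _ p.support_map_induce_subset
    calc (G.induce s).dist u v ≤ (q.induce s hq).length := dist_le _
      _ ≤ D := by rwa [Walk.length_induce]

lemma ComponentsDiamLE.mono (h : G.ComponentsDiamLE s D) {D' : ℕ} (hD : D ≤ D') :
    G.ComponentsDiamLE s D' :=
  fun u v huv => (h u v huv).trans hD

lemma Walk.support_subset_left_of_not_adj (hst : ∀ a ∈ s, ∀ c ∈ t, ¬G.Adj a c) :
    ∀ {u v : V} (p : G.Walk u v), u ∈ s → (∀ w ∈ p.support, w ∈ s ∪ t) →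
      ∀ w ∈ p.support, w ∈ s
  | _, _, .nil, hu, _ => by simpa
  | _, _, .cons hadj p, hu, hp => by
    have hc := (hp _ (by simp)).resolve_right (hst _ hu _ · hadj)
    have := p.support_subset_left_of_not_adj hst hc (fun w hw => hp w (by simp [hw]))
    simpa [hu]

lemma ComponentsDiamLE.union (hs : G.ComponentsDiamLE s D) (ht : G.ComponentsDiamLE t D)
    (hst : ∀ a ∈ s, ∀ c ∈ t, ¬G.Adj a c) : G.ComponentsDiamLE (s ∪ t) D := by
  rw [componentsDiamLE_iff] at hs ht ⊢
  intro u v p hp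
  rcases hp u p.start_mem_support with hu | hu
  · obtain ⟨q, hqD, hq⟩ := hs p (p.support_subset_left_of_not_adj hst hu hp)
    exact ⟨q, hqD, fun w hw => Or.inl (hq w hw)⟩
  · have hts : ∀ a ∈ t, ∀ c ∈ s, ¬G.Adj a c := fun a ha c hc hac => hst c hc a ha hac.symm
    obtain ⟨q, hqD, hq⟩ := ht p
      (p.support_subset_left_of_not_adj hts hu (fun w hw => (hp w hw).symm))
    exact ⟨q, hqD, fun w hw => Or.inr (hq w hw)⟩

lemma mem_inducedBall_self (hx : x ∈ s) (r : ℕ) : x ∈ G.inducedBall s x r :=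
  ⟨.nil, by simp, by simpa⟩

lemma inducedBall_subset : G.inducedBall s x r ⊆ s :=
  fun v ⟨p, _, hp⟩ => hp v p.end_mem_support

lemma inducedBall_mono : Monotone (G.inducedBall s x) :=
  fun _ _ hrr' _ ⟨p, hpr, hp⟩ => ⟨p, hpr.trans hrr', hp⟩

lemma mem_inducedBall_succ_of_adj (ha : a ∈ G.inducedBall s x r) (hc : c ∈ s) (hac : G.Adj a c) :
    c ∈ G.inducedBall s x (r + 1) := by
  obtain ⟨p, hpr, hp⟩ := ha
  refine ⟨p.concat hac, by simpa using hpr, ?_⟩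
  simp only [Walk.support_concat, List.mem_append, List.mem_singleton]
  rintro w (hw | rfl)
  exacts [hp w hw, hc]

lemma Walk.support_subset_inducedBall (p : G.Walk x v) (hpr : p.length ≤ r)
    (hp : ∀ w ∈ p.support, w ∈ s) : ∀ w ∈ p.support, w ∈ G.inducedBall s x r := by
  classical
  exact fun w hw => ⟨p.takeUntil w hw, (p.length_takeUntil_le_length hw).trans hpr,
    fun z hz => hp z (p.support_takeUntil_subset_support hw hz)⟩

lemma componentsDiamLE_inducedBall : G.ComponentsDiamLE (G.inducedBall s x r) (2 * r) := by
  rw [componentsDiamLE_iff]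
  intro u v p hp
  obtain ⟨pu, hpu, hu⟩ := hp u p.start_mem_support
  obtain ⟨pv, hpv, hv⟩ := hp v p.end_mem_support
  refine ⟨pu.reverse.append pv, by rw [Walk.length_append, Walk.length_reverse]; omega, ?_⟩
  simp only [Walk.mem_support_append_iff, Walk.support_reverse, List.mem_reverse]
  rintro w (hw | hw)
  exacts [pu.support_subset_inducedBall hpu hu w hw, pv.support_subset_inducedBall hpv hv w hw]

lemma exists_ncard_inducedBall_succ_le [Finite V] {b : ℕ} (hV : Nat.card V ≤ 2 ^ b)
    (hx : x ∈ s) :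
    ∃ r ≤ b, (G.inducedBall s x (r + 1)).ncard ≤ 2 * (G.inducedBall s x r).ncard := by
  refine exists_succ_le_two_mul_of_lt_two_pow (f := fun r => (G.inducedBall s x r).ncard)
    ((Set.ncard_pos (Set.toFinite _)).2 ⟨x, mem_inducedBall_self hx 0⟩) ?_
  have := (G.inducedBall s x (b + 1)).ncard_le_card
  have := Nat.two_pow_pos b
  rw [pow_succ]
  omega

theorem exists_componentsDiamLE_two_mul [Finite V] {b : ℕ} (hV : Nat.card V ≤ 2 ^ b)
    (A : Set V) : ∃ K ⊆ A, A.ncard ≤ 2 * K.ncard ∧ G.ComponentsDiamLE K (2 * b) := by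
  induction hA : A.ncard using Nat.strong_induction_on generalizing A with
  | _ m ih =>
  obtain rfl | ⟨x, hx⟩ := A.eq_empty_or_nonempty
  · exact ⟨∅, subset_rfl, by simp [← hA], fun u => absurd u.2 (Set.notMem_empty _)⟩
  obtain ⟨r, hrb, hgrowth⟩ := G.exists_ncard_inducedBall_succ_le hV hx
  set B := G.inducedBall A x r
  set B' := G.inducedBall A x (r + 1)
  have hA_eq : (A \ B').ncard + B'.ncard = A.ncard :=
    Set.ncard_sdiff_add_ncard_of_subset inducedBall_subset
  have hB'_pos : 0 < B'.ncard := (Set.ncard_pos (Set.toFinite _)).2 ⟨x, mem_inducedBall_self hx _⟩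
  obtain ⟨K, hK, hKcard, hKdiam⟩ := ih _ (by omega) (A \ B') rfl
  have hBK : Disjoint B K :=
    Set.disjoint_left.2 fun _ hB hK' => (hK hK').2 (inducedBall_mono r.le_succ hB)
  refine ⟨B ∪ K, Set.union_subset inducedBall_subset (hK.trans Set.sdiff_subset), ?_, ?_⟩
  · rw [Set.ncard_union_eq hBK]
    omega
  · refine (componentsDiamLE_inducedBall.mono (by omega)).union hKdiam ?_
    intro a ha c hc hac
    exact (hK hc).2 (mem_inducedBall_succ_of_adj ha (hK hc).1 hac)

end SimpleGraph

theorem main_clustering_exists_general {V : Type*} [Fintype V]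
    (G : SimpleGraph V) (n : ℕ) (hn : n = Fintype.card V)
    (b : ℕ) (hb : n ≤ 2 ^ b) :
    ∃ V' : Finset V, 2 * V'.card ≥ n ∧
      ∀ u v : (V' : Set V), (G.induce (V' : Set V)).Reachable u v →
        (G.induce (V' : Set V)).dist u v ≤ 8 * b ^ 3 := by
  obtain ⟨K, -, hcard, hdiam⟩ :=
    G.exists_componentsDiamLE_two_mul (b := b) (by rwa [Nat.card_eq_fintype_card, ← hn]) .univ
  refine ⟨K.toFinite.toFinset, ?_, ?_⟩
  · rw [← Set.ncard_eq_toFinset_card]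
    rwa [Set.ncard_univ, Nat.card_eq_fintype_card, ← hn] at hcard
  · rw [Set.Finite.coe_toFinset]
    refine hdiam.mono ?_
    have := Nat.le_self_pow (n := 3) (by norm_num) b
    omega

theorem main_clustering_exists {V : Type*} [Fintype V] [DecidableEq V]
    (G : SimpleGraph V) (n : ℕ) (hn : n = Fintype.card V)
    (b : ℕ) (hb : n ≤ 2 ^ b)
    (ident : V → Fin b → Bool) (hinj : Function.Injective ident) :
    ∃ V' : Finset V, 2 * V'.card ≥ n ∧
      ∀ u v : (V' : Set V), (G.induce (V' : Set V)).Reachable u v →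
        (G.induce (V' : Set V)).dist u v ≤ 8 * b ^ 3 :=
  main_clustering_exists_general G n hn b hb
end
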